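/- For any k1, k2, ℓ1, ℓ2 ∈ ℕ ∪ {ω} with (ℓ1,ℓ2) ≰ (k1,k2) (pointwise), there exist Büchi automata 𝒜 and ℬ over some alphabet Σ with a distribution function σ such that 𝒜 ⊑(ℓ1,ℓ2) ℬ but not 𝒜 ⊑(k1,k2) ℬ. -/

import Mathlib

open scoped Classical

/-- A Büchi automaton over alphabet `S`. -/
structure BA (S : Type) where
  Q : Type
  init : Q
  trans : Q → S → Q → Prop
  acc : Q → Prop

/-- The Büchi language of `A`: infinite words with a run from the initial state
visiting accepting states infinitely often. -/
def BA.Lang {S : Type} (A : BA S) : Set (ℕ → S) :=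
  { w | ∃ ρ : ℕ → A.Q, ρ 0 = A.init ∧ (∀ n, A.trans (ρ n) (w n) (ρ (n+1))) ∧
        ∀ n, ∃ m, n ≤ m ∧ A.acc (ρ m) }

/-- A configuration of the two-buffer simulation game: Spoiler's state, contents of
the two FIFO buffers (head = oldest letter), Duplicator's state. -/
structure Cfg {S : Type} (A B : BA S) where
  qa : A.Q
  b1 : List S
  b2 : List S
  qb : B.Q

/-- The configuration after Spoiler's move `m = (a, q')`: his state becomes `q'` and
the letter `a` is appended to buffer `σ a` (`true` = buffer 1, `false` = buffer 2). -/
def midCfg {S : Type} {A B : BA S} (σ : S → Bool) (c : Cfg A B) (m : S × A.Q) : Cfg A B :=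
  ⟨m.2, if σ m.1 then c.b1 ++ [m.1] else c.b1, if σ m.1 then c.b2 else c.b2 ++ [m.1], c.qb⟩

/-- Applying a finite sequence of Duplicator consumption steps: each step picks a buffer
(`true` = buffer 1) and a successor state, consuming the oldest letter of that buffer
along a matching transition of `B`.  Returns `none` if some step is illegal. -/
noncomputable def dupApply {S : Type} (A B : BA S) :
    Cfg A B → List (Bool × B.Q) → Option (Cfg A B)
  | c, [] => some c
  | c, (j, p') :: ms =>
    if j then
      match c.b1 with
      | [] => none
      | b :: β => if B.trans c.qb b p' then dupApply A B ⟨c.qa, β, c.b2, p'⟩ ms else none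
    else
      match c.b2 with
      | [] => none
      | b :: β => if B.trans c.qb b p' then dupApply A B ⟨c.qa, c.b1, β, p'⟩ ms else none

/-- The configuration at the start of round `n` (i.e. after Duplicator's moves of
round `n-1`), given Spoiler's moves `sp` and Duplicator's responses `dm`;
`none` once an illegal move has occurred. -/
noncomputable def playCfg {S : Type} (A B : BA S) (σ : S → Bool)
    (sp : ℕ → S × A.Q) (dm : ℕ → List (Bool × B.Q)) : ℕ → Option (Cfg A B)
  | 0 => some ⟨A.init, [], [], B.init⟩
  | n+1 =>
    match playCfg A B σ sp dm n with
    | none => none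
    | some c =>
      if A.trans c.qa (sp n).1 (sp n).2 then dupApply A B (midCfg σ c (sp n)) (dm n) else none

/-- Number of letters put into buffer `j` by Spoiler during the first `n` rounds. -/
noncomputable def pushed {S : Type} {QA : Type} (σ : S → Bool) (sp : ℕ → S × QA)
    (j : Bool) (n : ℕ) : ℕ :=
  ((Finset.range n).filter fun i => σ (sp i).1 = j).card

/-- Number of letters consumed from buffer `j` by Duplicator during the first `n` rounds. -/
noncomputable def consumed {QB : Type} (dm : ℕ → List (Bool × QB)) (j : Bool) (n : ℕ) : ℕ :=
  ∑ i ∈ Finset.range n, ((dm i).filter fun x => x.1 = j).length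

/-- Duplicator's strategy is consistent with the moves `dm` of a play. -/
def Consistent {S : Type} (A B : BA S)
    (dstrat : List ((S × A.Q) × List (Bool × B.Q)) → (S × A.Q) → List (Bool × B.Q))
    (sp : ℕ → S × A.Q) (dm : ℕ → List (Bool × B.Q)) : Prop :=
  ∀ n, dm n = dstrat (List.ofFn fun i : Fin n => (sp i, dm i)) (sp n)

/-- Spoiler's moves are legal as long as the play is defined. -/
def SpLegal {S : Type} (A B : BA S) (σ : S → Bool)
    (sp : ℕ → S × A.Q) (dm : ℕ → List (Bool × B.Q)) : Prop :=
  ∀ n c, playCfg A B σ sp dm n = some c → A.trans c.qa (sp n).1 (sp n).2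

/-- Duplicator's winning condition for a play of the two-buffer game with
capacities `(k1, k2)`: the buffers never exceed their capacities (checked after her
moves), and either Spoiler's run visits accepting states only finitely often, or
every letter put into a buffer is eventually consumed and Duplicator's run visits
accepting states infinitely often. -/
def Win2 {S : Type} (A B : BA S) (σ : S → Bool) (k1 k2 : ℕ∞)
    (sp : ℕ → S × A.Q) (dm : ℕ → List (Bool × B.Q)) : Prop :=
  (∀ n c, playCfg A B σ sp dm n = some c →
      (c.b1.length : ℕ∞) ≤ k1 ∧ (c.b2.length : ℕ∞) ≤ k2) ∧
  ((∃ N, ∀ n, N ≤ n → ¬ A.acc (sp n).2) ∨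
    ((∀ n j, ∃ m, pushed σ sp j n ≤ consumed dm j m) ∧
     (∀ n, ∃ m, n ≤ m ∧ ∃ x ∈ dm m, B.acc x.2)))

/-- `dstrat` is a winning strategy for Duplicator in the two-buffer simulation game on
`A`, `B` with letter distribution `σ` and capacities `(k1, k2)`: against every legal
behaviour of Spoiler, all of Duplicator's prescribed moves are legal (the play never
breaks) and the resulting play is won by Duplicator. -/
def WinningStrat2 {S : Type} (A B : BA S) (σ : S → Bool) (k1 k2 : ℕ∞)
    (dstrat : List ((S × A.Q) × List (Bool × B.Q)) → (S × A.Q) → List (Bool × B.Q)) : Prop :=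
  ∀ sp dm, Consistent A B dstrat sp dm → SpLegal A B σ sp dm →
    (∀ n, (playCfg A B σ sp dm n).isSome) ∧ Win2 A B σ k1 k2 sp dm

/-- Two-buffer simulation `A ⊑(k1,k2) B`: Duplicator has a winning strategy. -/
def Sim2 {S : Type} (A B : BA S) (σ : S → Bool) (k1 k2 : ℕ∞) : Prop :=
  ∃ dstrat, WinningStrat2 A B σ k1 k2 dstrat

/-!
Spoiler's automaton accepts every word and every letter goes to buffer `j`. Duplicator's
automaton `guessBA n` counts the letters it reads, guesses a letter `g` on its first
transition and accepts once the letter at position `n` turned out to be `g`; its language is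
everything, but Duplicator commits to the guess as soon as she consumes a letter. With capacity
`n` she can wait until the letter at position `n` is in the buffer and guess it. With a
smaller capacity she has to consume, and so guess, while only `n` letters have been played;
Spoiler then plays the other letter at position `n`, after which Duplicator can never consume
more than `n` letters. Taking `n = k_j + 1` for a buffer `j` with `k_j < ℓ_j` separates the
capacities.
-/

abbrev BA.univ (S : Type) : BA S := ⟨Unit, (), fun _ _ _ => True, fun _ => True⟩

def BA.StableAlong {S : Type} (B : BA S) (w : ℕ → S) (P : ℕ → B.Q → Prop) : Prop :=
  ∀ m q q', P m q → B.trans q (w m) q' → P (m + 1) q'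

def window {S : Type} (w : ℕ → S) (m k : ℕ) : List S := (List.range' m k).map w

theorem window_succ {S : Type} (w : ℕ → S) (m k : ℕ) :
    window w m (k + 1) = w m :: window w (m + 1) k := by
  simp [window, List.range'_succ]

theorem window_concat {S : Type} (w : ℕ → S) (m k : ℕ) :
    window w m k ++ [w (m + k)] = window w m (k + 1) := by
  simp [window, List.range'_concat]

def oneBuf {S : Type} {A B : BA S} (j : Bool) (qa : A.Q) (ls : List S) (qb : B.Q) : Cfg A B :=
  ⟨qa, if j then ls else [], if j then [] else ls, qb⟩

section OneBuffer

variable {S : Type} {A B : BA S} (j : Bool) (qa : A.Q)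

theorem oneBuf_length_le_iff {ls : List S} {qb : B.Q} {k1 k2 : ℕ∞} :
    (((oneBuf j qa ls qb : Cfg A B).b1.length : ℕ∞) ≤ k1 ∧
      ((oneBuf j qa ls qb : Cfg A B).b2.length : ℕ∞) ≤ k2) ↔
      (ls.length : ℕ∞) ≤ cond j k1 k2 := by
  cases j <;> simp [oneBuf]

theorem midCfg_oneBuf (ls : List S) (qb : B.Q) (m : S × A.Q) :
    midCfg (fun _ => j) (oneBuf j qa ls qb) m = oneBuf j m.2 (ls ++ [m.1]) qb := by
  cases j <;> simp [midCfg, oneBuf]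

theorem dupApply_oneBuf_cons_of_trans {a : S} {ls : List S} {q p : B.Q}
    (h : B.trans q a p) (L : List (Bool × B.Q)) :
    dupApply A B (oneBuf j qa (a :: ls) q) ((j, p) :: L) = dupApply A B (oneBuf j qa ls p) L := by
  cases j <;> simp [dupApply, oneBuf, h]

theorem dupApply_oneBuf_cons_eq_some {ls : List S} {q p : B.Q} {b : Bool}
    {L : List (Bool × B.Q)} {c : Cfg A B}
    (h : dupApply A B (oneBuf j qa ls q) ((b, p) :: L) = some c) :
    b = j ∧ ∃ a ls', ls = a :: ls' ∧ B.trans q a p ∧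
      dupApply A B (oneBuf j qa ls' p) L = some c := by
  cases j <;> cases b <;> cases ls <;> simp_all [dupApply, oneBuf]

end OneBuffer

theorem dupApply_window_of_stableAlong {S : Type} {A B : BA S} (j : Bool) (qa : A.Q)
    {w : ℕ → S} {P : ℕ → B.Q → Prop} (hP : B.StableAlong w P) :
    ∀ (L : List (Bool × B.Q)) (m k : ℕ) (q : B.Q) (c : Cfg A B), P m q →
      dupApply A B (oneBuf j qa (window w m k) q) L = some c →
      ∃ r k', r + k' = k ∧ (L.filter fun x => x.1 = j).length = r ∧
        c = oneBuf j qa (window w (m + r) k') c.qb ∧ P (m + r) c.qb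
  | [], m, k, q, c, hq, h => by
    obtain rfl : oneBuf j qa (window w m k) q = c := Option.some_injective _ h
    exact ⟨0, k, by simp, by simp, rfl, hq⟩
  | (b, p) :: L, m, k, q, c, hq, h => by
    obtain ⟨rfl, a, ls, hls, htr, h⟩ := dupApply_oneBuf_cons_eq_some j qa h
    obtain _ | k := k
    · simp [window] at hls
    rw [window_succ, List.cons.injEq] at hls
    obtain ⟨rfl, rfl⟩ := hls
    obtain ⟨r, k', hk, hL, hc, hPc⟩ :=
      dupApply_window_of_stableAlong _ qa hP L (m + 1) k p c (hP m q p hq htr) h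
    refine ⟨r + 1, k', by omega, by simp [hL], ?_, ?_⟩ <;> rwa [← add_assoc, add_right_comm]

theorem consumed_succ {Q : Type} (dm : ℕ → List (Bool × Q)) (j : Bool) (t : ℕ) :
    consumed dm j (t + 1) = consumed dm j t + ((dm t).filter fun x => x.1 = j).length :=
  Finset.sum_range_succ _ _

theorem consumed_mono {Q : Type} (dm : ℕ → List (Bool × Q)) (j : Bool) :
    Monotone (consumed dm j) := fun _ _ h =>
  Finset.sum_le_sum_of_subset (Finset.range_subset_range.2 h)

theorem pushed_const {S Q : Type} (j j' : Bool) (sp : ℕ → S × Q) (t : ℕ) :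
    pushed (fun _ => j) sp j' t = if j = j' then t else 0 := by
  by_cases h : j = j' <;> simp [pushed, h]

section UniversalSpoiler

variable {S : Type} {B : BA S} (j : Bool) (sp : ℕ → S × Unit) (dm : ℕ → List (Bool × B.Q))

local notation "play" => playCfg (BA.univ S) B (fun _ => j) sp dm

theorem playCfg_univ_succ (t : ℕ) :
    play (t + 1) =
      (play t).bind fun c => dupApply (BA.univ S) B (midCfg (fun _ => j) c (sp t)) (dm t) := by
  simp only [playCfg]
  cases play t <;> simp

theorem playCfg_univ_succ_eq_some {t : ℕ} {c' : Cfg (BA.univ S) B}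
    (h : play (t + 1) = some c') :
    ∃ c, play t = some c ∧
      dupApply (BA.univ S) B (midCfg (fun _ => j) c (sp t)) (dm t) = some c' :=
  Option.bind_eq_some_iff.1 ((playCfg_univ_succ j sp dm t).symm.trans h)

variable {j sp dm}

theorem playCfg_univ_step {P : ℕ → B.Q → Prop} (hP : B.StableAlong (fun i => (sp i).1) P)
    {t k : ℕ} {c c' : Cfg (BA.univ S) B} (hk : consumed dm j t + k = t)
    (hc : c = oneBuf j () (window (fun i => (sp i).1) (consumed dm j t) k) c.qb)
    (hPc : P (consumed dm j t) c.qb)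
    (h : dupApply (BA.univ S) B (midCfg (fun _ => j) c (sp t)) (dm t) = some c') :
    ∃ k', consumed dm j (t + 1) + k' = t + 1 ∧
      c' = oneBuf j () (window (fun i => (sp i).1) (consumed dm j (t + 1)) k') c'.qb ∧
      P (consumed dm j (t + 1)) c'.qb := by
  have hbuf : window (fun i => (sp i).1) (consumed dm j t) k ++ [(sp t).1]
      = window (fun i => (sp i).1) (consumed dm j t) (k + 1) := by
    rw [← window_concat, hk]
  rw [hc, midCfg_oneBuf, hbuf] at h
  obtain ⟨r, k', hrk, hL, hc', hPc'⟩ :=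
    dupApply_window_of_stableAlong j _ hP _ _ _ _ _ hPc h
  rw [consumed_succ, hL]
  exact ⟨k', by omega, hc', hPc'⟩

theorem playCfg_univ_eq_oneBuf {t : ℕ} {c : Cfg (BA.univ S) B} (h : play t = some c) :
    ∃ k, consumed dm j t + k = t ∧
      c = oneBuf j () (window (fun i => (sp i).1) (consumed dm j t) k) c.qb := by
  induction t generalizing c with
  | zero =>
    obtain rfl : oneBuf j () [] B.init = c := by cases j <;> simpa [playCfg, oneBuf] using h
    exact ⟨0, by simp [consumed], rfl⟩
  | succ t ih =>
    obtain ⟨c₀, h₀, h⟩ := playCfg_univ_succ_eq_some j sp dm h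
    obtain ⟨k, hk, hc₀⟩ := ih h₀
    obtain ⟨k', hk', hc, -⟩ :=
      playCfg_univ_step (P := fun _ _ => True) (fun _ _ _ _ _ => trivial) hk hc₀ trivial h
    exact ⟨k', hk', hc⟩

theorem playCfg_univ_stableAlong {P : ℕ → B.Q → Prop}
    (hP : B.StableAlong (fun i => (sp i).1) P) {s t : ℕ} (hst : s ≤ t)
    {cs c : Cfg (BA.univ S) B} (hs : play s = some cs)
    (hPs : P (consumed dm j s) cs.qb) (ht : play t = some c) : P (consumed dm j t) c.qb := by
  induction t, hst using Nat.le_induction generalizing c with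
  | base =>
    obtain rfl : cs = c := Option.some_injective _ (hs.symm.trans ht)
    exact hPs
  | succ t hst ih =>
    obtain ⟨c₀, h₀, h⟩ := playCfg_univ_succ_eq_some j sp dm ht
    obtain ⟨k, hk, hc₀⟩ := playCfg_univ_eq_oneBuf h₀
    obtain ⟨-, -, -, hPc⟩ := playCfg_univ_step hP hk hc₀ (ih h₀) h
    exact hPc

end UniversalSpoiler

section Strategies

variable {S : Type} {A B : BA S}

noncomputable def responses
    (f : List ((S × A.Q) × List (Bool × B.Q)) → (S × A.Q) → List (Bool × B.Q))
    (sp : ℕ → S × A.Q) : ℕ → List (Bool × B.Q)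
  | t => f (List.ofFn fun i : Fin t => (sp i, responses f sp i)) (sp t)
decreasing_by exact i.2

theorem consistent_responses
    (f : List ((S × A.Q) × List (Bool × B.Q)) → (S × A.Q) → List (Bool × B.Q))
    (sp : ℕ → S × A.Q) : Consistent A B f sp (responses f sp) := fun t => by
  rw [responses]

theorem responses_congr
    (f : List ((S × A.Q) × List (Bool × B.Q)) → (S × A.Q) → List (Bool × B.Q))
    {sp sp' : ℕ → S × A.Q} {t : ℕ} (h : ∀ i ≤ t, sp i = sp' i) :
    responses f sp t = responses f sp' t := by
  induction t using Nat.strong_induction_on with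
  | _ t ih =>
    rw [responses, responses, h t le_rfl]
    congr 2
    funext i
    rw [h i i.2.le, ih i i.2 fun i' hi' => h i' (hi'.trans i.2.le)]

theorem playCfg_congr (σ : S → Bool) {sp sp' : ℕ → S × A.Q}
    {dm dm' : ℕ → List (Bool × B.Q)} {t : ℕ} (h : ∀ i < t, sp i = sp' i ∧ dm i = dm' i) :
    playCfg A B σ sp dm t = playCfg A B σ sp' dm' t := by
  induction t with
  | zero => rfl
  | succ t ih =>
    simp only [playCfg, ih fun i hi => h i (by omega), (h t t.lt_succ_self).1,
      (h t t.lt_succ_self).2]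

end Strategies

/-- States `(m, g)`: `m` letters read so far, current guess `g`. The guess is free on the first
transition, fixed from then on up to position `n`, and the letter at position `n` must equal
it. -/
abbrev guessBA (n : ℕ) : BA Bool where
  Q := ℕ × Bool
  init := (0, true)
  trans q a q' :=
    q'.1 = q.1 + 1 ∧ (0 < q.1 → q.1 ≤ n → q'.2 = q.2) ∧ (q.1 = n → a = q'.2)
  acc q := n < q.1

section Guess

variable {n : ℕ}

theorem guessBA_height_stableAlong (w : ℕ → Bool) :
    (guessBA n).StableAlong w fun m q => q.1 = m := by
  rintro m q q' rfl ⟨h, -⟩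
  exact h

theorem guessBA_committed_stableAlong {w : ℕ → Bool} {g : Bool} (hw : w n = !g) :
    (guessBA n).StableAlong w fun m q => q = (m, g) ∧ 0 < m ∧ m ≤ n := by
  rintro m _ ⟨m', g'⟩ ⟨rfl, hm, hmn⟩ ⟨h1, h2, h3⟩
  simp only at h1 h2 h3
  obtain rfl : g' = g := h2 hm hmn
  have : m ≠ n := fun h => by simp [← h, h3 h] at hw
  exact ⟨by rw [h1], by omega, by omega⟩

def climb (j : Bool) (i : ℕ) (g : Bool) (k : ℕ) : List (Bool × ℕ × Bool) :=
  (List.range' (i + 1) k).map fun m => (j, (m, g))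

theorem climb_succ (j : Bool) (i : ℕ) (g : Bool) (k : ℕ) :
    climb j i g (k + 1) = (j, (i + 1, g)) :: climb j (i + 1) g k := by
  simp [climb, List.range'_succ]

theorem dupApply_climb (j : Bool) {w : ℕ → Bool} {g : Bool} (k i : ℕ) (q : ℕ × Bool)
    (hi : q.1 = i) (hg : 0 < i → i ≤ n → g = q.2) (hw : i ≤ n → n ≤ i + k → w n = g) :
    dupApply (BA.univ Bool) (guessBA n) (oneBuf j () (window w i (k + 1)) q)
      (climb j i g (k + 1)) = some (oneBuf j () [] (i + k + 1, g)) := by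
  subst hi
  have htr : (guessBA n).trans q (w q.1) (q.1 + 1, g) :=
    ⟨rfl, hg, fun h => h ▸ hw h.le (by omega)⟩
  rw [window_succ, climb_succ, dupApply_oneBuf_cons_of_trans (A := BA.univ Bool) j () htr]
  cases k with
  | zero => rfl
  | succ k =>
    rw [dupApply_climb j k (q.1 + 1) _ rfl (fun _ _ => rfl) fun _ _ => hw (by omega) (by omega)]
    congr 3
    omega

end Guess

def waitThenClimb (n : ℕ) (j : Bool) :
    List ((Bool × Unit) × List (Bool × ℕ × Bool)) → Bool × Unit →
      List (Bool × ℕ × Bool) :=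
  fun hist m =>
    if hist.length < n then []
    else if hist.length = n then climb j 0 m.1 (n + 1)
    else climb j hist.length m.1 1

section WaitThenClimb

variable {n : ℕ} {j : Bool} {sp : ℕ → Bool × Unit} {dm : ℕ → List (Bool × ℕ × Bool)}
  (hdm : Consistent (BA.univ Bool) (guessBA n) (waitThenClimb n j) sp dm)
include hdm

local notation "play" => playCfg (BA.univ Bool) (guessBA n) (fun _ => j) sp dm

theorem waitThenClimb_moves (t : ℕ) :
    dm t = if t < n then [] else if t = n then climb j 0 (sp t).1 (n + 1)
      else climb j t (sp t).1 1 := by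
  rw [hdm t]
  simp [waitThenClimb]

theorem playCfg_waitThenClimb_of_le {t : ℕ} (ht : t ≤ n) :
    play t = some (oneBuf j () (window (fun i => (sp i).1) 0 t) (0, true)) := by
  induction t with
  | zero => cases j <;> rfl
  | succ t ih =>
    rw [playCfg_univ_succ, ih (by omega), Option.bind_some, midCfg_oneBuf,
      waitThenClimb_moves hdm, if_pos (by omega), ← window_concat, zero_add]
    rfl

theorem playCfg_waitThenClimb_of_ge {t : ℕ} (ht : n ≤ t) :
    play (t + 1) = some (oneBuf j () [] (t + 1, (sp t).1)) := by
  induction t, ht using Nat.le_induction with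
  | base =>
    have hbuf := window_concat (fun i => (sp i).1) 0 n
    rw [zero_add] at hbuf
    rw [playCfg_univ_succ, playCfg_waitThenClimb_of_le hdm le_rfl, Option.bind_some,
      midCfg_oneBuf, hbuf, waitThenClimb_moves hdm, if_neg (lt_irrefl n), if_pos rfl,
      dupApply_climb j n 0 _ rfl (fun h => absurd h (lt_irrefl 0)) fun _ _ => rfl, zero_add]
  | succ t ht ih =>
    rw [playCfg_univ_succ, ih, Option.bind_some, midCfg_oneBuf, waitThenClimb_moves hdm,
      if_neg (show ¬t + 1 < n by omega), if_neg (show t + 1 ≠ n by omega)]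
    have hpast : ¬t + 1 ≤ n := by omega
    exact dupApply_climb j (w := fun i => (sp i).1) 0 (t + 1) (t + 1, (sp t).1) rfl
      (fun _ h => absurd h hpast) fun h => absurd h hpast

end WaitThenClimb

theorem sim2_guessBA {n : ℕ} {j : Bool} {k1 k2 : ℕ∞} (hn : (n : ℕ∞) ≤ cond j k1 k2) :
    Sim2 (BA.univ Bool) (guessBA n) (fun _ => j) k1 k2 := by
  refine ⟨waitThenClimb n j, fun sp dm hdm _ => ?_⟩
  have hplay : ∀ t, ∃ ls q, playCfg (BA.univ Bool) (guessBA n) (fun _ => j) sp dm t =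
      some (oneBuf j () ls q) ∧ ls.length ≤ n := by
    intro t
    rcases le_or_gt t n with ht | ht
    · exact ⟨_, _, playCfg_waitThenClimb_of_le hdm ht, by simp [window, ht]⟩
    · obtain ⟨t, rfl⟩ := Nat.exists_eq_add_of_lt ht
      exact ⟨_, _, playCfg_waitThenClimb_of_ge hdm (Nat.le_add_right n t), by simp⟩
  have hconsumed : ∀ t, n ≤ t → consumed dm j (t + 1) = t + 1 := fun t ht =>
    (playCfg_univ_stableAlong (guessBA_height_stableAlong _) (Nat.zero_le _) rfl
      (by simp [consumed]) (playCfg_waitThenClimb_of_ge hdm ht)).symm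
  refine ⟨fun t => ?_, fun t c hc => ?_,
    Or.inr ⟨fun t j' => ⟨n + t + 1, ?_⟩, fun t => ?_⟩⟩
  · obtain ⟨ls, q, h, -⟩ := hplay t
    simp [h]
  · obtain ⟨ls, q, h, hls⟩ := hplay t
    obtain rfl := Option.some_injective _ (h.symm.trans hc)
    rw [oneBuf_length_le_iff]
    exact le_trans (by exact_mod_cast hls) hn
  · rw [pushed_const]
    split_ifs with h
    · rw [← h, hconsumed _ (by omega)]
      omega
    · exact Nat.zero_le _
  · refine ⟨n + t + 1, by omega, (j, (n + t + 2, (sp (n + t + 1)).1)), ?_,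
      show n < n + t + 2 by omega⟩
    rw [waitThenClimb_moves hdm, if_neg (by omega), if_neg (by omega)]
    simp [climb]

theorem not_sim2_guessBA {n : ℕ} {j : Bool} {k1 k2 : ℕ∞} (hn : cond j k1 k2 < n) :
    ¬ Sim2 (BA.univ Bool) (guessBA n) (fun _ => j) k1 k2 := by
  rintro ⟨f, hf⟩
  have hplay := fun sp => hf sp (responses f sp) (consistent_responses f sp) fun _ _ _ => trivial
  obtain ⟨c, hc⟩ := Option.isSome_iff_exists.1 ((hplay fun _ => (true, ())).1 n)
  -- the same play up to time `n`, then the letter refuting the guess Duplicator committed to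
  set sp : ℕ → Bool × Unit := fun t => (if t = n then !c.qb.2 else true, ())
  set dm := responses f sp
  obtain ⟨hsome, hcap, hlive⟩ := hplay sp
  replace hc : playCfg (BA.univ Bool) (guessBA n) (fun _ => j) sp dm n = some c := by
    rw [← hc]
    refine (playCfg_congr _ fun i hi => ⟨?_, responses_congr f fun i' hi' => ?_⟩).symm
    · simp [sp, hi.ne]
    · simp [sp, (hi'.trans_lt hi).ne]
  obtain ⟨k, hk, hshape⟩ := playCfg_univ_eq_oneBuf hc
  have hheight : c.qb.1 = consumed dm j n :=
    playCfg_univ_stableAlong (guessBA_height_stableAlong _) (Nat.zero_le n) rfl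
      (by simp [consumed]) hc
  have hcommitted : 0 < consumed dm j n := by
    have hcapn := hcap n c hc
    rw [hshape, oneBuf_length_le_iff] at hcapn
    have : (k : ℕ∞) < n := by simpa [window] using hcapn.trans_lt hn
    norm_cast at this
    omega
  have hstuck : ∀ t, consumed dm j t ≤ n := by
    intro t
    obtain ⟨c', hc'⟩ := Option.isSome_iff_exists.1 (hsome (max t n))
    refine (consumed_mono dm j (le_max_left t n)).trans ?_
    have hrefuted : (sp n).1 = !c.qb.2 := by simp [sp]
    refine (playCfg_univ_stableAlong (guessBA_committed_stableAlong hrefuted)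
      (le_max_right t n) hc ⟨?_, hcommitted, by omega⟩ hc').2.2
    rw [← hheight]
  rcases hlive with ⟨N, hN⟩ | ⟨hdrain, -⟩
  · exact hN N le_rfl trivial
  · obtain ⟨m, hm⟩ := hdrain (n + 1) j
    rw [pushed_const, if_pos rfl] at hm
    exact absurd (hm.trans (hstuck m)) (by omega)

theorem twoBuffer_strict (k1 k2 l1 l2 : ℕ∞) (h : ¬ (l1 ≤ k1 ∧ l2 ≤ k2)) :
    ∃ (S : Type) (A B : BA S) (σ : S → Bool),
      Sim2 A B σ l1 l2 ∧ ¬ Sim2 A B σ k1 k2 := by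
  obtain ⟨j, hj⟩ : ∃ j : Bool, cond j k1 k2 < cond j l1 l2 := by
    by_contra! H
    exact h ⟨H true, H false⟩
  have hk : (((cond j k1 k2).toNat + 1 : ℕ) : ℕ∞) = cond j k1 k2 + 1 := by
    push_cast
    rw [ENat.natCast_toNat hj.ne_top]
  refine ⟨Bool, BA.univ Bool, guessBA ((cond j k1 k2).toNat + 1), fun _ => j,
    sim2_guessBA ?_, not_sim2_guessBA ?_⟩ <;> rw [hk]
  · exact (ENat.add_one_le_iff hj.ne_top).2 hj
  · exact (ENat.lt_add_one_iff hj.ne_top).2 le_rfl
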